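/- Let N be a positive integer and m a nonzero integer. Let R = ℤ[T,T⁻¹] be the ring of Laurent polynomials over ℤ, let A be the 4×4 matrix over R whose diagonal entries all equal T^N − 1, whose entry in row 1 and column 4 equals −mT, and whose other entries are zero, let M be the cokernel of the R-linear map R⁴ → R⁴ given by multiplication by A, and for i ∈ ℤ let σ_i ∈ M denote the class of the vector (0,0,0,i). Then σ_i ≠ σ_j in M whenever i and j are distinct integers. -/

import Mathlib

open LaurentPolynomial

noncomputable section

/-- The 4×4 matrix over ℤ[T,T⁻¹] with diagonal entries `T^N - 1`, entry `-m·T`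
in row 1, column 4 (zero-indexed: row 0, column 3), and all other entries zero. -/
def Amat (N : ℕ) (m : ℤ) : Matrix (Fin 4) (Fin 4) (LaurentPolynomial ℤ) :=
  fun i j =>
    if i = j then T (N : ℤ) - 1
    else if i = 0 ∧ j = 3 then -(m : LaurentPolynomial ℤ) * T 1
    else 0

/-- The cokernel of the map `R⁴ → R⁴` given by multiplication by `Amat N m`. -/
def Coker (N : ℕ) (m : ℤ) :=
  (Fin 4 → LaurentPolynomial ℤ) ⧸ LinearMap.range (Amat N m).mulVecLin

instance (N : ℕ) (m : ℤ) : AddCommGroup (Coker N m) :=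
  Submodule.Quotient.addCommGroup _

instance (N : ℕ) (m : ℤ) : Module (LaurentPolynomial ℤ) (Coker N m) :=
  Submodule.Quotient.module _

/-- `σ_i`: the class of the vector `(0,0,0,i)` in the cokernel. -/
def sigma (N : ℕ) (m : ℤ) (i : ℤ) : Coker N m :=
  Submodule.Quotient.mk ![0, 0, 0, (i : LaurentPolynomial ℤ)]

/-
The last row of `A` is `(0, 0, 0, T^N - 1)`, so reading the last coordinate of a vector and
evaluating it at `T = 1` kills the image of `A`; it sends `σ_i` to `i`.
-/

abbrev augmentation : LaurentPolynomial ℤ →+* ℤ :=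
  eval₂ (RingHom.id ℤ) 1

lemma Amat_mulVec_three (N : ℕ) (m : ℤ) (v : Fin 4 → LaurentPolynomial ℤ) :
    (Amat N m).mulVec v 3 = (T (N : ℤ) - 1) * v 3 := by
  simp [Matrix.mulVec, dotProduct, Amat]

lemma augmentation_Amat_mulVec_three (N : ℕ) (m : ℤ) (v : Fin 4 → LaurentPolynomial ℤ) :
    augmentation ((Amat N m).mulVec v 3) = 0 := by
  simp [Amat_mulVec_three]

lemma sigma_injective (N : ℕ) (m : ℤ) : Function.Injective (sigma N m) := by
  intro i j hij
  obtain ⟨v, hv⟩ := (Submodule.Quotient.eq _).mp hij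
  have haug := congrArg (fun w => augmentation (w 3)) hv
  simpa [augmentation_Amat_mulVec_three, sub_eq_zero] using haug.symm

theorem stmt4_general (N : ℕ) (m : ℤ) :
    ∀ i j : ℤ, i ≠ j → sigma N m i ≠ sigma N m j :=
  fun _ _ hij h => hij (sigma_injective N m h)

theorem stmt4 (N : ℕ) (hN : 0 < N) (m : ℤ) (hm : m ≠ 0) :
    ∀ i j : ℤ, i ≠ j → sigma N m i ≠ sigma N m j :=
  stmt4_general N m
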